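/- arXiv:2009.14596 — 2 statements merged into one kernel-verified Lean document; each statement's English description precedes it below -/
import Mathlib

section
/- Let f : [0,1]^d → ℝ be in the Barron space, i.e., f(x) = E_{(a,w)∼ρ}[a σ(wᵀx)] for some probability distribution ρ with E_ρ[a²‖w‖₁²] < ∞, where σ is ReLU. Then for every m ∈ ℕ there exist parameters (a_j, w_j), j = 1,…,m, such that the two-layer network f_m(x) = (1/m)∑_j a_j σ(w_jᵀ x) satisfies ‖f − f_m‖_{L²([0,1]^d)} ≤ C ‖f‖_B / √m, where ‖f‖_B = inf_{ρ ∈ P_f} (E_ρ[a²‖w‖₁²])^{1/2} and C is a universal constant. -/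
/-!
Maurey's sampling argument. Let `F x = ∫ φ p x ∂ρ` with `|φ p x| ≤ g p` and `g ∈ L²(ρ)`. For any
`h ∈ L²(μ)`, the average over `p ∼ ρ` of `∫ (h + (F - φ p))² ∂μ` is `∫ h² ∂μ + ∫ Var_ρ(φ · x) ∂μ`,
because the cross term has mean zero, and this is at most `∫ h² ∂μ + ∫ g² ∂ρ`; some `p` is no worse
than the average. Adding one neuron at a time gives `∫ (n F - ∑_{j<n} φ (p j))² ∂μ ≤ n ∫ g² ∂ρ`.
For ReLU neurons on the cube `|a σ(w ⬝ (x, 1))| ≤ |a| ‖w‖₁`, and a representing measure whose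
moment is within a factor `2` of the Barron norm gives `C = 2`. If the Barron norm vanishes, so
does `f` on the cube, because `|f x| ≤ ‖f‖_B`.
-/

open MeasureTheory

/-- ReLU activation. -/
noncomputable def relu (z : ℝ) : ℝ := max z 0

/-- `x ∈ [0,1]^d` extended by the constant `1` (bias coordinate). -/
noncomputable def ext {d : ℕ} (x : Fin d → ℝ) : Fin (d + 1) → ℝ :=
  Fin.snoc x 1

/-- Inner product on `ℝ^{d+1}`. -/
noncomputable def dot {d : ℕ} (w v : Fin (d + 1) → ℝ) : ℝ := ∑ i, w i * v i

/-- ℓ¹ norm on `ℝ^{d+1}`. -/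
noncomputable def l1 {d : ℕ} (w : Fin (d + 1) → ℝ) : ℝ := ∑ i, |w i|

/-- The unit cube `[0,1]^d`. -/
def cube (d : ℕ) : Set (Fin d → ℝ) := Set.Icc 0 1

/-- `ρ` is a representing measure for `f` on `[0,1]^d` with finite Barron moment. -/
def RepMeasure {d : ℕ} (f : (Fin d → ℝ) → ℝ) (ρ : Measure (ℝ × (Fin (d + 1) → ℝ))) : Prop :=
  IsProbabilityMeasure ρ ∧
    Integrable (fun p => p.1 ^ 2 * (l1 p.2) ^ 2) ρ ∧
    ∀ x ∈ cube d, f x = ∫ p, p.1 * relu (dot p.2 (ext x)) ∂ρ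

/-- The Barron norm `‖f‖_B = inf_{ρ ∈ P_f} (E_ρ[a²‖w‖₁²])^{1/2}`. -/
noncomputable def barronNorm {d : ℕ} (f : (Fin d → ℝ) → ℝ) : ℝ :=
  sInf { r | ∃ ρ : Measure (ℝ × (Fin (d + 1) → ℝ)), RepMeasure f ρ ∧
    r = Real.sqrt (∫ p, p.1 ^ 2 * (l1 p.2) ^ 2 ∂ρ) }

open ProbabilityTheory Function

section Variance

variable {P : Type*} [MeasurableSpace P] {ρ : Measure P} [IsProbabilityMeasure ρ] {Y : P → ℝ}

lemma sq_integral_le_integral_sq (hY : MemLp Y 2 ρ) : (∫ p, Y p ∂ρ) ^ 2 ≤ ∫ p, Y p ^ 2 ∂ρ := by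
  have := variance_nonneg Y ρ
  rw [variance_eq_sub hY] at this
  simpa using this

lemma integral_sq_add_integral_sub (hY : MemLp Y 2 ρ) (c : ℝ) :
    ∫ p, (c + (∫ q, Y q ∂ρ - Y p)) ^ 2 ∂ρ = c ^ 2 + variance Y ρ := by
  set a := c + ∫ q, Y q ∂ρ
  have hshift : MemLp (fun p => Y p - a) 2 ρ := hY.sub (memLp_const a)
  have hmean : ∫ p, (Y p - a) ∂ρ = -c := by
    rw [integral_sub (hY.integrable one_le_two) (integrable_const a)]
    simp [a]
  calc ∫ p, (c + (∫ q, Y q ∂ρ - Y p)) ^ 2 ∂ρ = ∫ p, (Y p - a) ^ 2 ∂ρ := by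
        congr 1; ext p; ring
    _ = variance (fun p => Y p - a) ρ + (∫ p, (Y p - a) ∂ρ) ^ 2 := by
        rw [variance_eq_sub hshift]; simp
    _ = c ^ 2 + variance Y ρ := by
        rw [hmean, variance_sub_const hY.aestronglyMeasurable]; ring

end Variance

section Maurey

variable {P X : Type*} [MeasurableSpace P] [MeasurableSpace X] {ρ : Measure P} {μ : Measure X}
  {φ : P → X → ℝ} {g : P → ℝ}

lemma memLp_apply_left (hφ : Measurable (uncurry φ)) (hg : MemLp g 2 ρ) {x : X}
    (hx : ∀ p, |φ p x| ≤ g p) : MemLp (fun p => φ p x) 2 ρ :=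
  hg.of_le (hφ.comp measurable_prodMk_right).aestronglyMeasurable
    (ae_of_all _ fun p => (hx p).trans (le_abs_self _))

lemma integral_sq_apply_le (hφ : Measurable (uncurry φ)) (hg : MemLp g 2 ρ) {x : X}
    (hx : ∀ p, |φ p x| ≤ g p) : ∫ p, φ p x ^ 2 ∂ρ ≤ ∫ p, g p ^ 2 ∂ρ :=
  integral_mono (memLp_apply_left hφ hg hx).integrable_sq hg.integrable_sq fun p =>
    sq_le_sq' (neg_le_of_abs_le (hx p)) (le_of_abs_le (hx p))

variable [IsProbabilityMeasure ρ] [IsProbabilityMeasure μ]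

lemma memLp_apply_right (hφ : Measurable (uncurry φ)) (hφg : ∀ᵐ x ∂μ, ∀ p, |φ p x| ≤ g p)
    (p : P) : MemLp (φ p) 2 μ :=
  MemLp.of_bound (hφ.comp measurable_prodMk_left).aestronglyMeasurable (g p)
    (hφg.mono fun _ hx => hx p)

lemma memLp_integral_left (hφ : Measurable (uncurry φ)) (hg : MemLp g 2 ρ)
    (hφg : ∀ᵐ x ∂μ, ∀ p, |φ p x| ≤ g p) : MemLp (fun x => ∫ p, φ p x ∂ρ) 2 μ :=
  MemLp.of_bound hφ.stronglyMeasurable.integral_prod_left'.aestronglyMeasurable (∫ p, g p ∂ρ)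
    (hφg.mono fun _ hx => norm_integral_le_of_norm_le (hg.integrable one_le_two) (ae_of_all _ hx))

lemma exists_integral_sq_add_integral_sub_le (hφ : Measurable (uncurry φ)) (hg : MemLp g 2 ρ)
    (hφg : ∀ᵐ x ∂μ, ∀ p, |φ p x| ≤ g p) {h : X → ℝ} (hh : MemLp h 2 μ) :
    ∃ p, ∫ x, (h x + (∫ q, φ q x ∂ρ - φ p x)) ^ 2 ∂μ ≤ ∫ x, h x ^ 2 ∂μ + ∫ p, g p ^ 2 ∂ρ := by
  set Ψ : P → X → ℝ := fun p x => (h x + (∫ q, φ q x ∂ρ - φ p x)) ^ 2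
  have hΨ : Integrable (uncurry Ψ) (ρ.prod μ) := by
    have hφ2 : MemLp (uncurry φ) 2 (ρ.prod μ) :=
      (hg.comp_measurePreserving measurePreserving_fst).of_le hφ.aestronglyMeasurable
        ((Measure.quasiMeasurePreserving_snd.ae hφg).mono fun q hq =>
          (hq q.1).trans (le_abs_self _))
    exact ((hh.comp_measurePreserving measurePreserving_snd).add
      (((memLp_integral_left hφ hg hφg).comp_measurePreserving measurePreserving_snd).sub
        hφ2)).integrable_sq
  have hpointwise : ∀ᵐ x ∂μ, ∫ p, Ψ p x ∂ρ ≤ h x ^ 2 + ∫ p, g p ^ 2 ∂ρ := by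
    filter_upwards [hφg] with x hx
    have hY := memLp_apply_left hφ hg hx
    rw [integral_sq_add_integral_sub hY]
    have := (variance_le_expectation_sq hY.aestronglyMeasurable).trans
      (integral_sq_apply_le hφ hg hx)
    linarith
  obtain ⟨p, hp⟩ := exists_le_integral hΨ.integral_prod_left
  refine ⟨p, ?_⟩
  calc ∫ x, Ψ p x ∂μ ≤ ∫ p, ∫ x, Ψ p x ∂μ ∂ρ := hp
    _ = ∫ x, ∫ p, Ψ p x ∂ρ ∂μ := integral_integral_swap hΨ
    _ ≤ ∫ x, (h x ^ 2 + ∫ p, g p ^ 2 ∂ρ) ∂μ :=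
        integral_mono_ae hΨ.integral_prod_right (hh.integrable_sq.add (integrable_const _))
          hpointwise
    _ = ∫ x, h x ^ 2 ∂μ + ∫ p, g p ^ 2 ∂ρ := by
        rw [integral_add hh.integrable_sq (integrable_const _)]; simp

-- Not divided by `n`, so that the statement also holds for `n = 0` and the induction starts there.
lemma exists_integral_sq_natCast_mul_sub_sum_le (hφ : Measurable (uncurry φ)) (hg : MemLp g 2 ρ)
    (hφg : ∀ᵐ x ∂μ, ∀ p, |φ p x| ≤ g p) (n : ℕ) :
    ∃ q : Fin n → P, ∫ x, (n * ∫ p, φ p x ∂ρ - ∑ j, φ (q j) x) ^ 2 ∂μ ≤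
      n * ∫ p, g p ^ 2 ∂ρ := by
  induction n with
  | zero => exact ⟨Fin.elim0, by simp⟩
  | succ n ih =>
    obtain ⟨q, hq⟩ := ih
    have hh : MemLp (fun x => n * ∫ p, φ p x ∂ρ - ∑ j, φ (q j) x) 2 μ :=
      ((memLp_integral_left hφ hg hφg).const_mul _).sub
        (memLp_finsetSum _ fun j _ => memLp_apply_right hφ hφg (q j))
    obtain ⟨p, hp⟩ := exists_integral_sq_add_integral_sub_le hφ hg hφg hh
    refine ⟨Fin.snoc q p, ?_⟩
    simp only [Fin.sum_univ_castSucc, Fin.snoc_castSucc, Fin.snoc_last, Nat.cast_succ]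
    calc ∫ x, ((n + 1) * ∫ p, φ p x ∂ρ - (∑ j, φ (q j) x + φ p x)) ^ 2 ∂μ
        = ∫ x, ((n * ∫ p, φ p x ∂ρ - ∑ j, φ (q j) x) + (∫ p, φ p x ∂ρ - φ p x)) ^ 2 ∂μ := by
          congr 1; ext x; ring
      _ ≤ n * ∫ p, g p ^ 2 ∂ρ + ∫ p, g p ^ 2 ∂ρ := by linarith
      _ = (n + 1) * ∫ p, g p ^ 2 ∂ρ := by ring

theorem exists_integral_sq_sub_average_le (hφ : Measurable (uncurry φ)) (hg : MemLp g 2 ρ)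
    (hφg : ∀ᵐ x ∂μ, ∀ p, |φ p x| ≤ g p) {m : ℕ} (hm : 0 < m) :
    ∃ q : Fin m → P, ∫ x, (∫ p, φ p x ∂ρ - (1 / (m : ℝ)) * ∑ j, φ (q j) x) ^ 2 ∂μ ≤
      (∫ p, g p ^ 2 ∂ρ) / m := by
  obtain ⟨q, hq⟩ := exists_integral_sq_natCast_mul_sub_sum_le hφ hg hφg m
  refine ⟨q, ?_⟩
  have hm' : (0 : ℝ) < m := Nat.cast_pos.mpr hm
  calc ∫ x, (∫ p, φ p x ∂ρ - (1 / (m : ℝ)) * ∑ j, φ (q j) x) ^ 2 ∂μ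
      = (1 / (m : ℝ)) ^ 2 * ∫ x, (m * ∫ p, φ p x ∂ρ - ∑ j, φ (q j) x) ^ 2 ∂μ := by
        rw [← integral_const_mul]; congr 1; ext x; field_simp
    _ ≤ (1 / (m : ℝ)) ^ 2 * (m * ∫ p, g p ^ 2 ∂ρ) := by gcongr
    _ = (∫ p, g p ^ 2 ∂ρ) / m := by field_simp

end Maurey

section Barron

variable {d : ℕ}

noncomputable def neuron (p : ℝ × (Fin (d + 1) → ℝ)) (x : Fin d → ℝ) : ℝ :=
  p.1 * relu (dot p.2 (ext x))

lemma abs_relu_le (z : ℝ) : |relu z| ≤ |z| :=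
  abs_max_le_max_abs_abs.trans (by simp)

@[fun_prop]
lemma continuous_ext : Continuous (ext (d := d)) :=
  Continuous.finSnoc (A := fun _ => ℝ) continuous_id continuous_const

lemma measurable_uncurry_neuron : Measurable (uncurry (neuron (d := d))) := by
  unfold neuron relu dot
  fun_prop

lemma abs_ext_le_one {x : Fin d → ℝ} (hx : x ∈ cube d) (i : Fin (d + 1)) : |ext x i| ≤ 1 := by
  induction i using Fin.lastCases with
  | last => simp [ext]
  | cast j =>
    simp only [ext, Fin.snoc_castSucc]
    exact abs_le.mpr ⟨by linarith [show (0 : ℝ) ≤ x j from hx.1 j], hx.2 j⟩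

lemma abs_dot_ext_le (w : Fin (d + 1) → ℝ) {x : Fin d → ℝ} (hx : x ∈ cube d) :
    |dot w (ext x)| ≤ l1 w :=
  (Finset.abs_sum_le_sum_abs _ _).trans <| Finset.sum_le_sum fun i _ => by
    rw [abs_mul]
    exact mul_le_of_le_one_right (abs_nonneg _) (abs_ext_le_one hx i)

lemma abs_neuron_le (p : ℝ × (Fin (d + 1) → ℝ)) {x : Fin d → ℝ} (hx : x ∈ cube d) :
    |neuron p x| ≤ |p.1| * l1 p.2 := by
  rw [neuron, abs_mul]
  exact mul_le_mul_of_nonneg_left ((abs_relu_le _).trans (abs_dot_ext_le p.2 hx)) (abs_nonneg _)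

lemma measurableSet_cube : MeasurableSet (cube d) := measurableSet_Icc

instance : IsProbabilityMeasure (volume.restrict (cube d)) :=
  ⟨by simp [cube, Real.volume_Icc_pi]⟩

lemma memLp_abs_mul_l1 {ρ : Measure (ℝ × (Fin (d + 1) → ℝ))}
    (hint : Integrable (fun p => p.1 ^ 2 * (l1 p.2) ^ 2) ρ) :
    MemLp (fun p : ℝ × (Fin (d + 1) → ℝ) => |p.1| * l1 p.2) 2 ρ := by
  have hl1 : Continuous (l1 (d := d)) := by unfold l1; fun_prop
  refine (memLp_two_iff_integrable_sq (by fun_prop)).mpr ?_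
  simpa only [mul_pow, sq_abs] using hint

variable {f : (Fin d → ℝ) → ℝ} {ρ : Measure (ℝ × (Fin (d + 1) → ℝ))}

lemma RepMeasure.sq_le_integral (hρ : RepMeasure f ρ) {x : Fin d → ℝ} (hx : x ∈ cube d) :
    f x ^ 2 ≤ ∫ p, p.1 ^ 2 * (l1 p.2) ^ 2 ∂ρ := by
  obtain ⟨_, hint, hrep⟩ := hρ
  have hg := memLp_abs_mul_l1 hint
  have hbound := fun p => abs_neuron_le p hx
  rw [hrep x hx]
  simpa only [neuron, mul_pow, sq_abs] using (sq_integral_le_integral_sq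
    (memLp_apply_left measurable_uncurry_neuron hg hbound)).trans
    (integral_sq_apply_le measurable_uncurry_neuron hg hbound)

theorem RepMeasure.exists_network_le (hρ : RepMeasure f ρ) {m : ℕ} (hm : 0 < m) :
    ∃ (a : Fin m → ℝ) (w : Fin m → (Fin (d + 1) → ℝ)),
      Real.sqrt (∫ x in cube d, (f x - (1 / (m : ℝ)) * ∑ j, a j * relu (dot (w j) (ext x))) ^ 2)
        ≤ Real.sqrt (∫ p, p.1 ^ 2 * (l1 p.2) ^ 2 ∂ρ) / Real.sqrt m := by
  obtain ⟨_, hint, hrep⟩ := hρ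
  obtain ⟨q, hq⟩ := exists_integral_sq_sub_average_le (μ := volume.restrict (cube d))
    measurable_uncurry_neuron (memLp_abs_mul_l1 hint)
    ((ae_restrict_mem measurableSet_cube).mono fun x hx p => abs_neuron_le p hx) hm
  refine ⟨fun j => (q j).1, fun j => (q j).2, ?_⟩
  rw [← Real.sqrt_div' _ (Nat.cast_nonneg m)]
  refine Real.sqrt_le_sqrt ?_
  rw [setIntegral_congr_fun measurableSet_cube fun x hx => by rw [hrep x hx]]
  simpa only [neuron, mul_pow, sq_abs] using hq

lemma barronNorm_nonneg : 0 ≤ barronNorm f :=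
  Real.sInf_nonneg <| by rintro r ⟨ρ, -, rfl⟩; exact Real.sqrt_nonneg _

lemma abs_le_barronNorm (hf : ∃ ρ, RepMeasure f ρ) {x : Fin d → ℝ} (hx : x ∈ cube d) :
    |f x| ≤ barronNorm f := by
  obtain ⟨ρ, hρ⟩ := hf
  exact le_csInf ⟨_, ρ, hρ, rfl⟩ <| by
    rintro r ⟨ρ', hρ', rfl⟩
    exact Real.abs_le_sqrt (hρ'.sq_le_integral hx)

lemma exists_repMeasure_sqrt_lt (hf : ∃ ρ, RepMeasure f ρ) {r : ℝ} (hr : barronNorm f < r) :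
    ∃ ρ, RepMeasure f ρ ∧ Real.sqrt (∫ p, p.1 ^ 2 * (l1 p.2) ^ 2 ∂ρ) < r := by
  obtain ⟨ρ, hρ⟩ := hf
  obtain ⟨_, ⟨ρ', hρ', rfl⟩, hlt⟩ := exists_lt_of_csInf_lt (by exact ⟨_, ρ, hρ, rfl⟩) hr
  exact ⟨ρ', hρ', hlt⟩

end Barron

/-- Direct approximation theorem: a Barron function can be approximated in `L²([0,1]^d)`
by a two-layer ReLU network of width `m` with rate `C‖f‖_B/√m` for a universal constant `C`. -/
theorem direct_approximation_barron :
    ∃ C : ℝ, 0 < C ∧ ∀ (d m : ℕ), 0 < m → ∀ f : (Fin d → ℝ) → ℝ,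
      (∃ ρ : Measure (ℝ × (Fin (d + 1) → ℝ)), RepMeasure f ρ) →
      ∃ (a : Fin m → ℝ) (w : Fin m → (Fin (d + 1) → ℝ)),
        Real.sqrt (∫ x in cube d,
            (f x - (1 / (m : ℝ)) * ∑ j, a j * relu (dot (w j) (ext x))) ^ 2)
          ≤ C * barronNorm f / Real.sqrt m := by
  refine ⟨2, two_pos, fun d m hm f hf => ?_⟩
  rcases barronNorm_nonneg.eq_or_lt with hzero | hpos
  · have hf0 : ∀ x ∈ cube d, f x = 0 := fun x hx =>
      abs_nonpos_iff.mp (hzero ▸ abs_le_barronNorm hf hx)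
    refine ⟨0, 0, ?_⟩
    rw [setIntegral_eq_zero_of_forall_eq_zero fun x hx => by simp [hf0 x hx], ← hzero]
    simp
  · obtain ⟨ρ, hρ, hlt⟩ := exists_repMeasure_sqrt_lt hf (lt_two_mul_self hpos)
    obtain ⟨a, w, happrox⟩ := hρ.exists_network_le hm
    exact ⟨a, w, happrox.trans (by gcongr)⟩
end

section
/- Let f(x) = E_{(a,w)∼ρ}[a σ(wᵀx)] with ReLU σ, where E_ρ[a²‖w‖₂²] < ∞. Let (a_j, w_j), j=1,…,m be i.i.d. samples from ρ and f_m(x) = (1/m)∑_j a_j σ(w_jᵀx). Then E[ ‖f − f_m‖²_{L²(μ)} ] ≤ E_ρ[a² ‖w‖₂²] · E_{x∼μ}[‖x‖₂²] / m for any probability measure μ on ℝ^d. -/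
open MeasureTheory

noncomputable def dotd {d : ℕ} (w x : Fin d → ℝ) : ℝ := ∑ i, w i * x i

/-- Squared Euclidean norm on `ℝ^d`. -/
noncomputable def l2sq {d : ℕ} (w : Fin d → ℝ) : ℝ := ∑ i, (w i) ^ 2

/-!
For fixed `x`, the network output `f_m(x)` is the mean of `m` i.i.d. copies of
`Y_x(a, w) = a σ(wᵀx)`, whose expectation is `f(x)`. Independence gives
`E(f(x) - f_m(x))² = Var(Y_x)/m ≤ E[Y_x²]/m ≤ E_ρ[a²‖w‖²] ‖x‖²/m`, the last step because
`|σ(wᵀx)| ≤ |wᵀx| ≤ ‖w‖ ‖x‖`. Integrating over `x ∼ μ` and exchanging the two integrals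
(Tonelli) gives the theorem.
-/

open ProbabilityTheory

section SampleMean

variable {α : Type*} [MeasurableSpace α] {ρ : Measure α} [IsProbabilityMeasure ρ] {m : ℕ}

noncomputable def sampleMean (Y : α → ℝ) (P : Fin m → α) : ℝ := (1 / (m : ℝ)) * ∑ j, Y (P j)

lemma memLp_sampleMean {p : ENNReal} {Y : α → ℝ} (hY : MemLp Y p ρ) :
    MemLp (sampleMean Y) p (Measure.pi fun _ : Fin m => ρ) := by
  have hsum := memLp_finsetSum Finset.univ fun j _ =>
    hY.comp_measurePreserving (measurePreserving_eval (fun _ : Fin m => ρ) j)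
  exact hsum.const_mul (1 / (m : ℝ))

lemma integral_sampleMean {Y : α → ℝ} (hY : Integrable Y ρ) (hm : m ≠ 0) :
    ∫ P, sampleMean Y P ∂(Measure.pi fun _ : Fin m => ρ) = ∫ a, Y a ∂ρ := by
  simp only [sampleMean]
  rw [integral_const_mul,
    integral_finsetSum _ fun j _ => integrable_comp_eval (μ := fun _ => ρ) hY]
  simp only [integral_comp_eval (μ := fun _ => ρ) hY.aestronglyMeasurable, Finset.sum_const,
    Finset.card_univ, Fintype.card_fin, nsmul_eq_mul]
  field_simp

lemma variance_sampleMean {Y : α → ℝ} (hY : MemLp Y 2 ρ) :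
    Var[sampleMean Y; Measure.pi fun _ : Fin m => ρ] = Var[Y; ρ] / m := by
  have hsum : (fun P : Fin m → α => ∑ j, Y (P j)) = ∑ j, fun P => Y (P j) := by
    ext P; simp
  unfold sampleMean
  rw [variance_const_mul, hsum, variance_sum_pi fun _ => hY]
  simp only [Finset.sum_const, Finset.card_univ, Fintype.card_fin, nsmul_eq_mul]
  rcases eq_or_ne (m : ℝ) 0 with h | h
  · simp [h]
  · field_simp

lemma lintegral_sq_sub_sampleMean {Y : α → ℝ} (hY : MemLp Y 2 ρ) (hm : m ≠ 0) :
    ∫⁻ P, ENNReal.ofReal ((∫ a, Y a ∂ρ - sampleMean Y P) ^ 2) ∂(Measure.pi fun _ : Fin m => ρ)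
      = ENNReal.ofReal (Var[Y; ρ] / m) := by
  rw [← variance_sampleMean hY, ofReal_variance (memLp_sampleMean hY),
    evariance_eq_lintegral_ofReal, integral_sampleMean (hY.integrable one_le_two) hm]
  simp_rw [sub_sq_comm]

end SampleMean

section Neuron

variable {β : Type*} [TopologicalSpace β] {d : ℕ}

@[fun_prop]
lemma Continuous.relu {g : β → ℝ} (hg : Continuous g) : Continuous fun b => relu (g b) :=
  hg.max continuous_const

@[fun_prop]
lemma Continuous.dotd {g h : β → Fin d → ℝ} (hg : Continuous g) (hh : Continuous h) :
    Continuous fun b => dotd (g b) (h b) := by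
  unfold _root_.dotd; fun_prop

lemma continuous_l2sq : Continuous (l2sq : (Fin d → ℝ) → ℝ) := by
  unfold l2sq; fun_prop

lemma l2sq_nonneg (w : Fin d → ℝ) : 0 ≤ l2sq w :=
  Finset.sum_nonneg fun i _ => sq_nonneg (w i)

lemma relu_sq_le_sq (z : ℝ) : relu z ^ 2 ≤ z ^ 2 := by
  rcases le_total z 0 with h | h
  · simp [relu, max_eq_right h, sq_nonneg]
  · simp [relu, max_eq_left h]

lemma dotd_sq_le (w x : Fin d → ℝ) : dotd w x ^ 2 ≤ l2sq w * l2sq x :=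
  Finset.sum_mul_sq_le_sq_mul_sq _ _ _

lemma neuron_sq_le (a : ℝ) (w x : Fin d → ℝ) :
    (a * relu (dotd w x)) ^ 2 ≤ a ^ 2 * l2sq w * l2sq x := by
  rw [mul_pow, mul_assoc]
  exact mul_le_mul_of_nonneg_left ((relu_sq_le_sq _).trans (dotd_sq_le w x)) (sq_nonneg a)

variable {ρ : Measure (ℝ × (Fin d → ℝ))}

lemma memLp_neuron (hmom : Integrable (fun p => p.1 ^ 2 * l2sq p.2) ρ) (x : Fin d → ℝ) :
    MemLp (fun p => p.1 * relu (dotd p.2 x)) 2 ρ := by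
  have hcont : Continuous fun p : ℝ × (Fin d → ℝ) => p.1 * relu (dotd p.2 x) := by fun_prop
  refine (memLp_two_iff_integrable_sq hcont.aestronglyMeasurable).2 ?_
  refine (hmom.mul_const (l2sq x)).mono' (by fun_prop) (Filter.Eventually.of_forall fun p => ?_)
  rw [Real.norm_of_nonneg (sq_nonneg _)]
  exact neuron_sq_le _ _ _

lemma integral_neuron_sq_le (hmom : Integrable (fun p => p.1 ^ 2 * l2sq p.2) ρ)
    (x : Fin d → ℝ) :
    ∫ p, (p.1 * relu (dotd p.2 x)) ^ 2 ∂ρ ≤ (∫ p, p.1 ^ 2 * l2sq p.2 ∂ρ) * l2sq x := by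
  rw [← integral_mul_const]
  exact integral_mono (memLp_neuron hmom x).integrable_sq (hmom.mul_const _)
    fun p => neuron_sq_le _ _ _

end Neuron

/-- Monte Carlo sampling proof of the direct approximation theorem: sampling the parameters
`(a_j,w_j)` i.i.d. from `ρ` gives `E‖f − f_m‖²_{L²(μ)} ≤ E_ρ[a²‖w‖₂²] E_μ[‖x‖₂²]/m` for any
probability measure `μ` on `ℝ^d`. -/
theorem monte_carlo_two_layer_sampling {d : ℕ}
    (ρ : Measure (ℝ × (Fin d → ℝ))) [IsProbabilityMeasure ρ]
    (hmom : Integrable (fun p => p.1 ^ 2 * l2sq p.2) ρ)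
    (f : (Fin d → ℝ) → ℝ)
    (hf : ∀ x, f x = ∫ p, p.1 * relu (dotd p.2 x) ∂ρ)
    (m : ℕ) (hm : 0 < m)
    (μ : Measure (Fin d → ℝ)) [IsProbabilityMeasure μ] :
    ∫⁻ P : Fin m → ℝ × (Fin d → ℝ),
        (∫⁻ x, ENNReal.ofReal
            ((f x - (1 / (m : ℝ)) * ∑ j, (P j).1 * relu (dotd (P j).2 x)) ^ 2) ∂μ)
        ∂(Measure.pi fun _ : Fin m => ρ)
      ≤ (∫⁻ p, ENNReal.ofReal (p.1 ^ 2 * l2sq p.2) ∂ρ)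
          * (∫⁻ x, ENNReal.ofReal (l2sq x) ∂μ) / m := by
  set A := ∫ p, p.1 ^ 2 * l2sq p.2 ∂ρ
  have hf_meas : Measurable f := by
    rw [funext hf]
    exact (StronglyMeasurable.integral_prod_right
      (f := fun (x : Fin d → ℝ) (p : ℝ × (Fin d → ℝ)) => p.1 * relu (dotd p.2 x))
      (by fun_prop : Continuous _).stronglyMeasurable).measurable
  have hpointwise (x : Fin d → ℝ) :
      ∫⁻ P, ENNReal.ofReal ((f x - sampleMean (fun p => p.1 * relu (dotd p.2 x)) P) ^ 2)
          ∂(Measure.pi fun _ : Fin m => ρ)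
        ≤ ENNReal.ofReal (A * l2sq x / m) := by
    rw [hf x, lintegral_sq_sub_sampleMean (memLp_neuron hmom x) hm.ne']
    gcongr
    exact (variance_le_expectation_sq (memLp_neuron hmom x).aestronglyMeasurable).trans
      (integral_neuron_sq_le hmom x)
  rw [lintegral_lintegral_swap (by fun_prop)]
  calc _ ≤ ∫⁻ x, ENNReal.ofReal A * ENNReal.ofReal (l2sq x) / m ∂μ := by
        refine lintegral_mono fun x => (hpointwise x).trans_eq ?_
        rw [ENNReal.ofReal_div_of_pos (by positivity), ENNReal.ofReal_mul
          (integral_nonneg fun p => mul_nonneg (sq_nonneg _) (l2sq_nonneg _)),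
          ENNReal.ofReal_natCast]
    _ = _ := by
        simp_rw [div_eq_mul_inv, mul_assoc]
        rw [lintegral_const_mul _ ((continuous_l2sq.measurable.ennreal_ofReal).mul_const _),
          lintegral_mul_const _ continuous_l2sq.measurable.ennreal_ofReal,
          ofReal_integral_eq_lintegral_ofReal hmom
            (Filter.Eventually.of_forall fun p => mul_nonneg (sq_nonneg _) (l2sq_nonneg _))]
end
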